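/- arXiv:1801.03345 — 2 statements merged into one kernel-verified Lean document; each statement's English description precedes it below -/
import Mathlib

section
/- For every 0 < ε < 1/4, the μ-mass of the margin region satisfies μ({x : |η(x) − 1/2| ≤ ε}) ≥ (2π)^(−1/2) · min( (ε/Δ)·exp(−(1 + Δ/2)²/2), exp(−1/2)/2 ). -/
/-!
The mixture dominates half of the standard Gaussian; its density `stdGaussianDensity d` is
identified with `stdGaussian` by comparing characteristic functions. The regression function
is the logistic function of `⟪x, m⟫ - Δ² / 2`, and the logistic function is `1/4`-Lipschitz, so the
margin region contains the slab `|⟪u, x⟫ - Δ / 2| ≤ 4ε / Δ` with `u = m / Δ`. Under the standard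
Gaussian `⟪u, x⟫` is `N(0, 1)`, and the normal mass of that interval is at least its length (or a
unit subinterval, when it is long, which forces `Δ` to be small) times the smallest density on it.
-/

open MeasureTheory Real

/-- Standard Gaussian density on `ℝ^d`. -/
noncomputable def stdGaussianDensity (d : ℕ) (x : EuclideanSpace ℝ (Fin d)) : ℝ :=
  (2 * π) ^ (-(d : ℝ) / 2) * Real.exp (-‖x‖ ^ 2 / 2)

/-- Regression function of the Gaussian translation model:
`η(x) = γ_d(x − m) / (γ_d(x) + γ_d(x − m))`. -/
noncomputable def gaussEta (d : ℕ) (m : EuclideanSpace ℝ (Fin d))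
    (x : EuclideanSpace ℝ (Fin d)) : ℝ :=
  stdGaussianDensity d (x - m) / (stdGaussianDensity d x + stdGaussianDensity d (x - m))

/-- Marginal (mixture) law of the design: density `(γ_d(x) + γ_d(x − m))/2`
with respect to Lebesgue measure. -/
noncomputable def gaussMixture (d : ℕ) (m : EuclideanSpace ℝ (Fin d)) :
    Measure (EuclideanSpace ℝ (Fin d)) :=
  volume.withDensity fun x =>
    ENNReal.ofReal ((stdGaussianDensity d x + stdGaussianDensity d (x - m)) / 2)

open ProbabilityTheory
open scoped RealInnerProductSpace ENNReal

lemma ENNReal.inv_two_eq_ofReal : (2⁻¹ : ℝ≥0∞) = ENNReal.ofReal 2⁻¹ := by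
  rw [ENNReal.ofReal_inv_of_pos two_pos, ENNReal.ofReal_ofNat]

lemma integrable_stdGaussianDensity (d : ℕ) : Integrable (stdGaussianDensity d) := by
  have h : ∫ x : EuclideanSpace ℝ (Fin d), exp (-(1 / 2) * ‖x‖ ^ 2) ≠ 0 := by
    rw [GaussianFourier.integral_rexp_neg_mul_sq_norm (by norm_num)]
    positivity
  refine ((Integrable.of_integral_ne_zero h).const_mul ((2 * π) ^ (-(d : ℝ) / 2))).congr
    (ae_of_all _ fun x => ?_)
  simp only [stdGaussianDensity]
  ring_nf

lemma withDensity_stdGaussianDensity (d : ℕ) :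
    volume.withDensity (fun x => ENNReal.ofReal (stdGaussianDensity d x))
      = stdGaussian (EuclideanSpace ℝ (Fin d)) := by
  have := isFiniteMeasure_withDensity_ofReal (integrable_stdGaussianDensity d).2
  refine Measure.ext_of_charFun (funext fun t => ?_)
  have hpos : (0 : ℝ) < 2 * π := by positivity
  rw [charFun_stdGaussian, charFun_apply, integral_withDensity_eq_integral_toReal_smul
    (by unfold stdGaussianDensity; fun_prop) (ae_of_all _ fun _ => ENNReal.ofReal_lt_top)]
  calc ∫ x, (ENNReal.ofReal (stdGaussianDensity d x)).toReal • Complex.exp (⟪x, t⟫ * Complex.I)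
      = ((2 * π) ^ (-(d : ℝ) / 2) : ℝ) *
          ∫ x : EuclideanSpace ℝ (Fin d),
            Complex.exp (-(1 / 2) * ‖x‖ ^ 2 + Complex.I * ⟪t, x⟫) := by
        rw [← integral_const_mul]
        refine integral_congr_ae (ae_of_all _ fun x => ?_)
        simp only [stdGaussianDensity]
        rw [ENNReal.toReal_ofReal (by positivity), Complex.real_smul,
          Complex.ofReal_mul, Complex.ofReal_exp, mul_assoc, ← Complex.exp_add, real_inner_comm]
        push_cast
        ring_nf
    _ = Complex.exp (-‖t‖ ^ 2 / 2) := by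
        rw [GaussianFourier.integral_cexp_neg_mul_sq_norm_add (by norm_num),
          finrank_euclideanSpace_fin, show (π : ℂ) / (1 / 2) = ((2 * π : ℝ) : ℂ) by push_cast; ring,
          ← Complex.ofReal_natCast, ← Complex.ofReal_ofNat, ← Complex.ofReal_div,
          ← Complex.ofReal_cpow hpos.le, ← mul_assoc, ← Complex.ofReal_mul, ← Real.rpow_add hpos,
          neg_div, neg_add_cancel, Real.rpow_zero, Complex.ofReal_one, one_mul, Complex.I_sq]
        congr 1
        push_cast
        ring

lemma half_smul_stdGaussian_le_gaussMixture (d : ℕ) (m : EuclideanSpace ℝ (Fin d)) :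
    (2⁻¹ : ℝ≥0∞) • stdGaussian (EuclideanSpace ℝ (Fin d)) ≤ gaussMixture d m := by
  rw [← withDensity_stdGaussianDensity, ← withDensity_smul' _ _ (by simp)]
  refine withDensity_mono (ae_of_all _ fun x => ?_)
  have : 0 < stdGaussianDensity d (x - m) := by unfold stdGaussianDensity; positivity
  rw [Pi.smul_apply, smul_eq_mul, ENNReal.inv_two_eq_ofReal, ← ENNReal.ofReal_mul (by norm_num)]
  exact ENNReal.ofReal_le_ofReal (by linarith)

lemma stdGaussian_map_inner {E : Type*} [NormedAddCommGroup E] [InnerProductSpace ℝ E]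
    [FiniteDimensional ℝ E] [MeasurableSpace E] [BorelSpace E] (u : E) :
    (stdGaussian E).map (fun x => ⟪u, x⟫) = gaussianReal 0 (‖u‖₊ ^ 2) := by
  have h := IsGaussian.map_eq_gaussianReal (μ := stdGaussian E) (innerSL ℝ u)
  rw [integral_strongDual_stdGaussian, variance_dual_stdGaussian, innerSL_apply_norm] at h
  convert h using 2
  · rfl
  · rw [← NNReal.coe_inj]
    simp

lemma lipschitzWith_sigmoid : LipschitzWith (1 / 4) sigmoid := by
  refine lipschitzWith_of_nnnorm_deriv_le differentiable_sigmoid fun x => ?_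
  rw [deriv_sigmoid, ← NNReal.coe_le_coe, coe_nnnorm, Real.norm_eq_abs]
  have := sigmoid_pos x
  have := sigmoid_lt_one x
  rw [abs_of_pos (by nlinarith)]
  push_cast
  nlinarith [sq_nonneg (2 * sigmoid x - 1)]

lemma abs_sigmoid_sub_half_le (t : ℝ) : |sigmoid t - 1 / 2| ≤ |t| / 4 := by
  have := lipschitzWith_sigmoid.dist_le_mul t 0
  rw [Real.dist_eq, Real.dist_eq, sigmoid_zero, sub_zero, ← one_div] at this
  push_cast at this
  linarith

lemma gaussEta_eq_sigmoid (d : ℕ) (m x : EuclideanSpace ℝ (Fin d)) :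
    gaussEta d m x = sigmoid (⟪x, m⟫ - ‖m‖ ^ 2 / 2) := by
  have hratio : stdGaussianDensity d x / stdGaussianDensity d (x - m)
      = exp (-(⟪x, m⟫ - ‖m‖ ^ 2 / 2)) := by
    rw [stdGaussianDensity, stdGaussianDensity, mul_div_mul_left _ _ (by positivity),
      ← exp_sub, norm_sub_sq_real]
    ring_nf
  have hpos : 0 < stdGaussianDensity d (x - m) := by unfold stdGaussianDensity; positivity
  rw [gaussEta, sigmoid_def, ← hratio]
  field_simp
  ring

lemma preimage_inner_Icc_subset_margin {d : ℕ} {m : EuclideanSpace ℝ (Fin d)} (hm : m ≠ 0)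
    (ε : ℝ) :
    (fun x => ⟪‖m‖⁻¹ • m, x⟫) ⁻¹' Set.Icc (‖m‖ / 2 - 4 * ε / ‖m‖) (‖m‖ / 2 + 4 * ε / ‖m‖)
      ⊆ {x | |gaussEta d m x - 1 / 2| ≤ ε} := by
  intro x hx
  have hΔ : 0 < ‖m‖ := norm_pos_iff.2 hm
  have hx : |⟪x, m⟫ - ‖m‖ ^ 2 / 2| ≤ 4 * ε := by
    rw [Set.mem_preimage, real_inner_smul_left, real_inner_comm, Set.mem_Icc] at hx
    have hlo := mul_le_mul_of_nonneg_left hx.1 hΔ.le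
    have hhi := mul_le_mul_of_nonneg_left hx.2 hΔ.le
    field_simp at hlo hhi
    rw [abs_le]
    constructor <;> linarith
  have := abs_sigmoid_sub_half_le (⟪x, m⟫ - ‖m‖ ^ 2 / 2)
  simp only [Set.mem_ofPred_eq, gaussEta_eq_sigmoid]
  linarith

lemma ofReal_mul_le_gaussianReal_Icc {p q c : ℝ} (hpq : p ≤ q)
    (hc : ∀ t ∈ Set.Icc p q, c ≤ exp (-t ^ 2 / 2)) :
    ENNReal.ofReal ((2 * π) ^ (-(1 : ℝ) / 2) * ((q - p) * c)) ≤ gaussianReal 0 1 (Set.Icc p q) := by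
  have hc₀ : (2 * π) ^ (-(1 : ℝ) / 2) = (√(2 * π))⁻¹ := by
    rw [sqrt_eq_rpow, ← rpow_neg (by positivity), neg_div]
  rw [gaussianReal_apply 0 one_ne_zero]
  calc ENNReal.ofReal ((2 * π) ^ (-(1 : ℝ) / 2) * ((q - p) * c))
      ≤ ∫⁻ _ in Set.Icc p q, ENNReal.ofReal ((2 * π) ^ (-(1 : ℝ) / 2) * c) := by
        rw [setLIntegral_const, Real.volume_Icc, ← ENNReal.ofReal_mul' (sub_nonneg.2 hpq)]
        exact ENNReal.ofReal_le_ofReal (le_of_eq (by ring))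
    _ ≤ ∫⁻ t in Set.Icc p q, gaussianPDF 0 1 t := by
        refine setLIntegral_mono (measurable_gaussianPDF 0 1) fun t ht => ?_
        rw [gaussianPDF, gaussianPDFReal, hc₀]
        simp only [sub_zero, NNReal.coe_one, mul_one]
        gcongr
        exact hc t ht

lemma min_le_gaussianReal_Icc {a r : ℝ} (ha : 0 ≤ a) (hr : 0 < r) (har : a * r ≤ 1) :
    ENNReal.ofReal ((2 * π) ^ (-(1 : ℝ) / 2) *
        min (r * exp (-(1 + a) ^ 2 / 2)) (exp (-(1 : ℝ) / 2)))
      ≤ gaussianReal 0 1 (Set.Icc (a - r) (a + r)) := by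
  rcases le_or_gt r 1 with hr1 | hr1
  · calc _ ≤ ENNReal.ofReal
            ((2 * π) ^ (-(1 : ℝ) / 2) * ((a - (a - r)) * exp (-(1 + a) ^ 2 / 2))) := by
          gcongr
          exact (min_le_left _ _).trans_eq (by ring)
      _ ≤ gaussianReal 0 1 (Set.Icc (a - r) a) := by
          refine ofReal_mul_le_gaussianReal_Icc (by linarith) fun t ht =>
            exp_le_exp.2 (by nlinarith [ht.1, ht.2])
      _ ≤ gaussianReal 0 1 (Set.Icc (a - r) (a + r)) :=
          measure_mono (Set.Icc_subset_Icc le_rfl (by linarith))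
  · have ha1 : a ≤ 1 := by nlinarith
    calc _ ≤ ENNReal.ofReal
            ((2 * π) ^ (-(1 : ℝ) / 2) * ((a - (a - 1)) * exp (-(1 : ℝ) / 2))) := by
          gcongr
          exact (min_le_right _ _).trans_eq (by ring)
      _ ≤ gaussianReal 0 1 (Set.Icc (a - 1) a) := by
          refine ofReal_mul_le_gaussianReal_Icc (by linarith) fun t ht =>
            exp_le_exp.2 (by nlinarith [ht.1, ht.2])
      _ ≤ gaussianReal 0 1 (Set.Icc (a - r) (a + r)) :=
          measure_mono (Set.Icc_subset_Icc (by linarith) (by linarith))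

theorem margin_lower_bound_general (d : ℕ)
    (m : EuclideanSpace ℝ (Fin d)) (hm : m ≠ 0)
    (ε : ℝ) (hε0 : 0 < ε) (hε : ε < 1 / 4) :
    ENNReal.ofReal ((2 * π) ^ (-(1 : ℝ) / 2) *
        min ((ε / ‖m‖) * Real.exp (-(1 + ‖m‖ / 2) ^ 2 / 2)) (Real.exp (-(1 : ℝ) / 2) / 2))
      ≤ gaussMixture d m {x | |gaussEta d m x - 1 / 2| ≤ ε} := by
  have hΔ : 0 < ‖m‖ := norm_pos_iff.2 hm
  have hu : ‖‖m‖⁻¹ • m‖₊ ^ 2 = 1 := by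
    rw [nnnorm_smul, nnnorm_inv, nnnorm_norm, inv_mul_cancel₀ (nnnorm_ne_zero_iff.2 hm), one_pow]
  calc _ ≤ 2⁻¹ * ENNReal.ofReal ((2 * π) ^ (-(1 : ℝ) / 2) *
          min (4 * ε / ‖m‖ * exp (-(1 + ‖m‖ / 2) ^ 2 / 2)) (exp (-(1 : ℝ) / 2))) := by
        rw [ENNReal.inv_two_eq_ofReal, ← ENNReal.ofReal_mul (p := 2⁻¹) (by norm_num), mul_left_comm]
        gcongr
        rw [mul_min_of_nonneg _ _ (by norm_num)]
        refine min_le_min ?_ (by linarith)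
        rw [← mul_assoc]
        gcongr
        linarith [div_pos hε0 hΔ, show 2⁻¹ * (4 * ε / ‖m‖) = 2 * (ε / ‖m‖) by ring]
    _ ≤ 2⁻¹ * gaussianReal 0 1 (Set.Icc (‖m‖ / 2 - 4 * ε / ‖m‖) (‖m‖ / 2 + 4 * ε / ‖m‖)) := by
        gcongr
        exact min_le_gaussianReal_Icc (by positivity) (by positivity) (by field_simp; linarith)
    _ = ((2⁻¹ : ℝ≥0∞) • stdGaussian _) ((fun x => ⟪‖m‖⁻¹ • m, x⟫) ⁻¹'
          Set.Icc (‖m‖ / 2 - 4 * ε / ‖m‖) (‖m‖ / 2 + 4 * ε / ‖m‖)) := by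
        rw [← hu, ← stdGaussian_map_inner, Measure.map_apply (by fun_prop) measurableSet_Icc]
        rfl
    _ ≤ gaussMixture d m _ := half_smul_stdGaussian_le_gaussMixture d m _
    _ ≤ _ := measure_mono (preimage_inner_Icc_subset_margin hm ε)

/-- Margin lower bound (Proposition C.1, finite-dimensional form):
for `0 < ε < 1/4`,
`μ(|η − 1/2| ≤ ε) ≥ (2π)^(−1/2) · min((ε/Δ)·exp(−(1+Δ/2)²/2), exp(−1/2)/2)`. -/
theorem margin_lower_bound (d : ℕ) (hd : 1 ≤ d)
    (m : EuclideanSpace ℝ (Fin d)) (hm : m ≠ 0)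
    (ε : ℝ) (hε0 : 0 < ε) (hε : ε < 1 / 4) :
    ENNReal.ofReal ((2 * π) ^ (-(1 : ℝ) / 2) *
        min ((ε / ‖m‖) * Real.exp (-(1 + ‖m‖ / 2) ^ 2 / 2)) (Real.exp (-(1 : ℝ) / 2) / 2))
      ≤ gaussMixture d m {x | |gaussEta d m x - 1 / 2| ≤ ε} :=
  margin_lower_bound_general d m hm ε hε0 hε
end

section
/- For every x ∈ ℝ^d and every r > 0, the averaged regression function satisfies |η̄(x,r) − η(x)| ≤ r² · (‖x − m‖² + ‖x‖²). -/
/-!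
Reflecting the ball `B(x, r)` through its centre shows
`∫_{B(x,r)} γ(y - v) dy = γ(x - v) · C_v`, where
`C_v = ∫_{‖u‖<r} cosh ⟪x - v, u⟫ e^{-‖u‖²/2} du`.
Hence, with `a = γ(x - m)` and `b = γ(x)`, `η̄(x, r) = a C_m / (b C_0 + a C_m)` while
`η(x) = a / (b + a)`. On the ball `⟪x - v, u⟫² ≤ r² ‖x - v‖²`, and
`cosh t - 1 ≤ (t²/2) cosh t`, so `|C_m - C_0| ≤ ε (C_m + C_0)` with
`ε = r² (‖x - m‖² + ‖x‖²) / 2`; an elementary inequality turns this into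
`|η̄(x, r) - η(x)| ≤ ε`.
-/

open MeasureTheory Real

/-- `μ`-average of `η` over the Euclidean ball `B(x,r)`. -/
noncomputable def gaussEtaBar (d : ℕ) (m : EuclideanSpace ℝ (Fin d))
    (x : EuclideanSpace ℝ (Fin d)) (r : ℝ) : ℝ :=
  ((gaussMixture d m (Metric.ball x r)).toReal)⁻¹ *
    ∫ y in Metric.ball x r, gaussEta d m y ∂(gaussMixture d m)

open Metric

theorem cosh_sub_one_le (t : ℝ) : cosh t - 1 ≤ t ^ 2 / 2 * cosh t := by
  -- `cosh t ≤ exp (t²/2)` and `1 - t²/2 ≤ exp (-t²/2)` give `cosh t * (1 - t²/2) ≤ 1`.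
  have hexp : exp (t ^ 2 / 2) * exp (-(t ^ 2 / 2)) = 1 := by rw [← exp_add]; simp
  nlinarith [cosh_le_exp_half_sq t, add_one_le_exp (-(t ^ 2 / 2)), one_le_cosh t,
    exp_pos (t ^ 2 / 2), exp_pos (-(t ^ 2 / 2))]

theorem abs_cosh_sub_cosh_le {s t ε : ℝ} (hs : s ^ 2 ≤ ε) (ht : t ^ 2 ≤ ε) :
    |cosh s - cosh t| ≤ ε / 2 * (cosh s + cosh t) := by
  have hs' := cosh_sub_one_le s
  have ht' := cosh_sub_one_le t
  have := one_le_cosh s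
  have := one_le_cosh t
  -- Both values are `≥ 1`, so their distance is at most `(cosh s - 1) + (cosh t - 1)`.
  rw [abs_sub_le_iff]
  constructor <;> nlinarith

theorem abs_mul_div_add_sub_div_add_le {a b p q ε : ℝ} (ha : 0 < a) (hb : 0 < b) (hp : 0 < p)
    (hq : 0 < q) (h : |p - q| ≤ ε * (p + q)) :
    |a * p / (b * q + a * p) - a / (b + a)| ≤ ε := by
  have hden : 0 < (b * q + a * p) * (b + a) := by positivity
  rw [div_sub_div _ _ (by positivity) (by positivity), abs_div, abs_of_pos hden,
    div_le_iff₀ hden]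
  calc |a * p * (b + a) - (b * q + a * p) * a| = a * b * |p - q| := by
        rw [show a * p * (b + a) - (b * q + a * p) * a = a * b * (p - q) by ring, abs_mul,
          abs_of_pos (by positivity)]
    _ ≤ a * b * (ε * (p + q)) := by gcongr
    _ ≤ ε * ((b * q + a * p) * (b + a)) := by
        have hε : 0 ≤ ε := nonneg_of_mul_nonneg_left ((abs_nonneg _).trans h) (by positivity)
        nlinarith [mul_nonneg hε (mul_nonneg (mul_nonneg ha.le ha.le) hp.le),
          mul_nonneg hε (mul_nonneg (mul_nonneg hb.le hb.le) hq.le)]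

section Ball

variable {E : Type*} [NormedAddCommGroup E] [MeasurableSpace E] [BorelSpace E]

theorem setIntegral_ball_comp_reflect (μ : Measure E) [μ.IsAddLeftInvariant] [μ.IsNegInvariant]
    (f : E → ℝ) (x : E) (r : ℝ) :
    ∫ y in ball x r, f (x + x - y) ∂μ = ∫ y in ball x r, f y ∂μ := by
  rw [← integral_indicator measurableSet_ball, ← integral_indicator measurableSet_ball,
    ← integral_sub_left_eq_self (ball x r |>.indicator f) μ (x + x)]
  congr 1 with y
  have hmem : x + x - y ∈ ball x r ↔ y ∈ ball x r := by
    rw [mem_ball, mem_ball, dist_eq_norm, dist_eq_norm, show x + x - y - x = -(y - x) by abel,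
      norm_neg]
  by_cases hy : y ∈ ball x r <;> simp [hmem, hy]

variable [ProperSpace E] {μ : Measure E} [IsFiniteMeasureOnCompacts μ] {f : E → ℝ}

theorem Continuous.integrableOn_ball (hf : Continuous f) (x : E) (r : ℝ) :
    IntegrableOn f (ball x r) μ :=
  (hf.continuousOn.integrableOn_compact (isCompact_closedBall x r)).mono_set
    ball_subset_closedBall

theorem Continuous.setIntegral_ball_pos [μ.IsOpenPosMeasure] (hf : Continuous f)
    (hpos : ∀ y, 0 < f y) (x : E) {r : ℝ} (hr : 0 < r) : 0 < ∫ y in ball x r, f y ∂μ := by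
  rw [setIntegral_pos_iff_support_of_nonneg_ae
    (Filter.Eventually.of_forall fun y => (hpos y).le) (hf.integrableOn_ball x r),
    Function.support_eq_univ fun y => (hpos y).ne', Set.univ_inter]
  exact measure_ball_pos μ x hr

end Ball

section CoshWeight

variable {E : Type*} [NormedAddCommGroup E] [InnerProductSpace ℝ E]

noncomputable def coshWeight (z u : E) : ℝ :=
  cosh (inner ℝ z u) * exp (-‖u‖ ^ 2 / 2)

theorem coshWeight_pos (z u : E) : 0 < coshWeight z u :=
  mul_pos (cosh_pos _) (exp_pos _)

theorem continuous_coshWeight (z : E) : Continuous (coshWeight z) := by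
  unfold coshWeight; fun_prop

theorem abs_coshWeight_sub_le {z z' u : E} {r : ℝ} (hu : ‖u‖ ≤ r) :
    |coshWeight z u - coshWeight z' u|
      ≤ r ^ 2 * (‖z‖ ^ 2 + ‖z'‖ ^ 2) / 2 * (coshWeight z u + coshWeight z' u) := by
  have inner_sq_le (w : E) : inner ℝ w u ^ 2 ≤ r ^ 2 * ‖w‖ ^ 2 := by
    have hu2 : ‖u‖ ^ 2 ≤ r ^ 2 := pow_le_pow_left₀ (norm_nonneg u) hu 2
    calc inner ℝ w u ^ 2 ≤ (‖w‖ * ‖u‖) ^ 2 := by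
          rw [← sq_abs]; exact pow_le_pow_left₀ (abs_nonneg _) (abs_real_inner_le_norm w u) 2
      _ ≤ r ^ 2 * ‖w‖ ^ 2 := by rw [mul_pow]; nlinarith [sq_nonneg ‖w‖]
  have hcosh := abs_cosh_sub_cosh_le (ε := r ^ 2 * (‖z‖ ^ 2 + ‖z'‖ ^ 2))
    ((inner_sq_le z).trans (by nlinarith [sq_nonneg r, sq_nonneg ‖z'‖]))
    ((inner_sq_le z').trans (by nlinarith [sq_nonneg r, sq_nonneg ‖z‖]))
  simp only [coshWeight, ← sub_mul, ← add_mul, abs_mul, abs_of_pos (exp_pos _), ← mul_assoc]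
  exact mul_le_mul_of_nonneg_right hcosh (exp_pos _).le

variable [MeasurableSpace E] [BorelSpace E] [ProperSpace E] (μ : Measure E)
  [IsFiniteMeasureOnCompacts μ]

theorem abs_setIntegral_coshWeight_sub_le (z z' x : E) (r : ℝ) :
    |∫ y in ball x r, coshWeight z (y - x) ∂μ
        - ∫ y in ball x r, coshWeight z' (y - x) ∂μ|
      ≤ r ^ 2 * (‖z‖ ^ 2 + ‖z'‖ ^ 2) / 2 *
        (∫ y in ball x r, coshWeight z (y - x) ∂μ
          + ∫ y in ball x r, coshWeight z' (y - x) ∂μ) := by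
  have hint (w : E) : IntegrableOn (fun y => coshWeight w (y - x)) (ball x r) μ :=
    ((continuous_coshWeight w).comp (continuous_sub_right x)).integrableOn_ball x r
  rw [← integral_sub (hint z) (hint z'), ← integral_add (hint z) (hint z'),
    ← integral_const_mul]
  refine abs_integral_le_integral_abs.trans (setIntegral_mono_on ((hint z).sub (hint z')).abs
    (((hint z).add (hint z')).const_mul _) measurableSet_ball fun y hy => ?_)
  exact abs_coshWeight_sub_le (mem_ball_iff_norm.mp hy).le

end CoshWeight

section Gaussian

variable {d : ℕ}

theorem stdGaussianDensity_pos (y : EuclideanSpace ℝ (Fin d)) : 0 < stdGaussianDensity d y := by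
  unfold stdGaussianDensity; positivity

theorem continuous_stdGaussianDensity : Continuous (stdGaussianDensity d) := by
  unfold stdGaussianDensity; fun_prop

theorem stdGaussianDensity_add_add_stdGaussianDensity_sub (z u : EuclideanSpace ℝ (Fin d)) :
    stdGaussianDensity d (z + u) + stdGaussianDensity d (z - u)
      = 2 * stdGaussianDensity d z * coshWeight z u := by
  simp only [stdGaussianDensity, coshWeight, cosh_eq, norm_add_sq_real, norm_sub_sq_real]
  rw [show -(‖z‖ ^ 2 + 2 * inner ℝ z u + ‖u‖ ^ 2) / 2
      = -‖z‖ ^ 2 / 2 + (-‖u‖ ^ 2 / 2 + -inner ℝ z u) by ring,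
    show -(‖z‖ ^ 2 - 2 * inner ℝ z u + ‖u‖ ^ 2) / 2
      = -‖z‖ ^ 2 / 2 + (-‖u‖ ^ 2 / 2 + inner ℝ z u) by ring]
  simp only [exp_add]
  ring

theorem setIntegral_ball_stdGaussianDensity_sub (v x : EuclideanSpace ℝ (Fin d)) (r : ℝ) :
    ∫ y in ball x r, stdGaussianDensity d (y - v)
      = stdGaussianDensity d (x - v) * ∫ y in ball x r, coshWeight (x - v) (y - x) := by
  have hcont : Continuous fun y => stdGaussianDensity d (y - v) :=
    continuous_stdGaussianDensity.comp (continuous_sub_right v)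
  have hint := hcont.integrableOn_ball (μ := volume) x r
  have hint' : IntegrableOn (fun y => stdGaussianDensity d (x + x - y - v)) (ball x r) :=
    (hcont.comp (continuous_sub_left (x + x))).integrableOn_ball x r
  have hrefl : ∫ y in ball x r, stdGaussianDensity d (x + x - y - v)
      = ∫ y in ball x r, stdGaussianDensity d (y - v) :=
    setIntegral_ball_comp_reflect volume (fun y => stdGaussianDensity d (y - v)) x r
  have hsymm : ∀ y, stdGaussianDensity d (y - v) + stdGaussianDensity d (x + x - y - v)
      = 2 * stdGaussianDensity d (x - v) * coshWeight (x - v) (y - x) := fun y => by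
    rw [← stdGaussianDensity_add_add_stdGaussianDensity_sub]
    congr 2 <;> abel
  have := integral_add hint hint'
  simp only [hsymm, integral_const_mul, hrefl] at this
  linarith

theorem setIntegral_gaussMixture (m : EuclideanSpace ℝ (Fin d))
    (g : EuclideanSpace ℝ (Fin d) → ℝ) (s : Set (EuclideanSpace ℝ (Fin d))) :
    ∫ y in s, g y ∂gaussMixture d m
      = ∫ y in s, (stdGaussianDensity d y + stdGaussianDensity d (y - m)) / 2 * g y := by
  have hmeas : Measurable fun y : EuclideanSpace ℝ (Fin d) =>
      ((stdGaussianDensity d y + stdGaussianDensity d (y - m)) / 2).toNNReal := by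
    unfold stdGaussianDensity; fun_prop
  have hdens : gaussMixture d m = volume.withDensity fun y =>
      (((stdGaussianDensity d y + stdGaussianDensity d (y - m)) / 2).toNNReal : ENNReal) := rfl
  rw [hdens, setIntegral_withDensity_eq_setIntegral_smul₀' s hmeas.aemeasurable]
  congr 1 with y
  rw [NNReal.smul_def, smul_eq_mul, Real.coe_toNNReal _
    (div_pos (add_pos (stdGaussianDensity_pos y) (stdGaussianDensity_pos (y - m))) two_pos).le]

theorem gaussEtaBar_eq (m x : EuclideanSpace ℝ (Fin d)) (r : ℝ) :
    gaussEtaBar d m x r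
      = stdGaussianDensity d (x - m) * (∫ y in ball x r, coshWeight (x - m) (y - x)) /
        (stdGaussianDensity d x * (∫ y in ball x r, coshWeight x (y - x))
          + stdGaussianDensity d (x - m) * ∫ y in ball x r, coshWeight (x - m) (y - x)) := by
  have hγ := setIntegral_ball_stdGaussianDensity_sub (0 : EuclideanSpace ℝ (Fin d)) x r
  simp only [sub_zero] at hγ
  have hγm := setIntegral_ball_stdGaussianDensity_sub m x r
  have hmass :
      (gaussMixture d m (ball x r)).toReal = ∫ _ in ball x r, (1 : ℝ) ∂gaussMixture d m := by
    rw [setIntegral_const, smul_eq_mul, mul_one, measureReal_def]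
  have heta : ∀ y, (stdGaussianDensity d y + stdGaussianDensity d (y - m)) / 2 * gaussEta d m y
      = stdGaussianDensity d (y - m) / 2 := fun y => by
    have := add_pos (stdGaussianDensity_pos y) (stdGaussianDensity_pos (y - m))
    rw [gaussEta]; field_simp
  rw [gaussEtaBar, hmass, setIntegral_gaussMixture, setIntegral_gaussMixture]
  simp only [mul_one, heta, integral_div]
  have hintm : IntegrableOn (fun y => stdGaussianDensity d (y - m)) (ball x r) :=
    (continuous_stdGaussianDensity.comp (continuous_sub_right m)).integrableOn_ball x r
  rw [integral_add (continuous_stdGaussianDensity.integrableOn_ball x r) hintm, hγ, hγm]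
  field_simp

end Gaussian

theorem etaBar_sub_eta_le_general (d : ℕ)
    (m : EuclideanSpace ℝ (Fin d))
    (x : EuclideanSpace ℝ (Fin d)) (r : ℝ) (hr : 0 < r) :
    |gaussEtaBar d m x r - gaussEta d m x| ≤ r ^ 2 * (‖x - m‖ ^ 2 + ‖x‖ ^ 2) := by
  have hpos (z : EuclideanSpace ℝ (Fin d)) : 0 < ∫ y in ball x r, coshWeight z (y - x) :=
    ((continuous_coshWeight z).comp (continuous_sub_right x)).setIntegral_ball_pos
      (fun y => coshWeight_pos z (y - x)) x hr
  have hclose := abs_setIntegral_coshWeight_sub_le volume (x - m) x x r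
  rw [gaussEtaBar_eq, gaussEta]
  calc _ ≤ r ^ 2 * (‖x - m‖ ^ 2 + ‖x‖ ^ 2) / 2 :=
        abs_mul_div_add_sub_div_add_le (stdGaussianDensity_pos _) (stdGaussianDensity_pos _)
          (hpos (x - m)) (hpos x) hclose
    _ ≤ _ := half_le_self (by positivity)

/-- Inequality (tec1) in the proof of Proposition 4.1:
`|η̄(x,r) − η(x)| ≤ r²·(‖x − m‖² + ‖x‖²)`. -/
theorem etaBar_sub_eta_le (d : ℕ) (hd : 1 ≤ d)
    (m : EuclideanSpace ℝ (Fin d)) (hm : m ≠ 0)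
    (x : EuclideanSpace ℝ (Fin d)) (r : ℝ) (hr : 0 < r) :
    |gaussEtaBar d m x r - gaussEta d m x| ≤ r ^ 2 * (‖x - m‖ ^ 2 + ‖x‖ ^ 2) :=
  etaBar_sub_eta_le_general d m x r hr
end
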